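/- For any Markov chain U - X - Y of finite-valued random variables, I(U;Y) ≤ s*(X;Y) · I(U;X). -/
import Mathlib


open scoped BigOperators

noncomputable section

/-- `p` is a probability mass function on a finite type. -/
def IsPMF {X : Type*} [Fintype X] (p : X → ℝ) : Prop :=
  (∀ x, 0 ≤ p x) ∧ ∑ x, p x = 1

/-- `p` is a joint probability mass function. -/
def IsJointPMF {X Y : Type*} [Fintype X] [Fintype Y] (p : X → Y → ℝ) : Prop :=
  (∀ x y, 0 ≤ p x y) ∧ ∑ x, ∑ y, p x y = 1

/-- Hirschfeld–Gebelein–Rényi maximal correlation of a joint pmf `p`. -/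
def maxCorr {X Y : Type*} [Fintype X] [Fintype Y] (p : X → Y → ℝ) : ℝ :=
  sSup {c : ℝ | ∃ f : X → ℝ, ∃ g : Y → ℝ,
    (∑ x, ∑ y, p x y * f x) = 0 ∧ (∑ x, ∑ y, p x y * g y) = 0 ∧
    (∑ x, ∑ y, p x y * (f x)^2) = 1 ∧ (∑ x, ∑ y, p x y * (g y)^2) = 1 ∧
    c = ∑ x, ∑ y, p x y * f x * g y}

/-- Relative entropy (KL divergence) between pmfs on a finite type. -/
def KL {X : Type*} [Fintype X] (r p : X → ℝ) : ℝ :=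
  ∑ x, r x * Real.log (r x / p x)

/-- `s*(X;Y)` for input distribution `p` and channel `W`. -/
def sStar {X Y : Type*} [Fintype X] [Fintype Y] (p : X → ℝ) (W : X → Y → ℝ) : ℝ :=
  sSup {c : ℝ | ∃ r : X → ℝ, IsPMF r ∧ r ≠ p ∧
    c = KL (fun y => ∑ x, r x * W x y) (fun y => ∑ x, p x * W x y) / KL r p}

/-- Shannon entropy of a pmf on a finite type. -/
def entropy {X : Type*} [Fintype X] (p : X → ℝ) : ℝ :=
  ∑ x, Real.negMulLog (p x)

/-- Mutual information of a joint pmf. -/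
def mutInfo {X Y : Type*} [Fintype X] [Fintype Y] (p : X → Y → ℝ) : ℝ :=
  entropy (fun x => ∑ y, p x y) + entropy (fun y => ∑ x, p x y)
    - entropy (fun z : X × Y => p z.1 z.2)

end

open Finset

private lemma ptwise_log {a b : ℝ} (ha : 0 < a) (hb : 0 < b) :
    a - b ≤ a * Real.log (a / b) := by
  have h1 : Real.log (b / a) ≤ b / a - 1 := Real.log_le_sub_one_of_pos (by positivity)
  have h2 : Real.log (b / a) = - Real.log (a / b) := by
    rw [← Real.log_inv, inv_div]
  rw [h2] at h1
  have h3 := mul_le_mul_of_nonneg_left h1 ha.le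
  have h4 : a * (b / a - 1) = b - a := by field_simp
  rw [h4, mul_neg] at h3
  linarith

private lemma ptwise_log_strict {a b : ℝ} (ha : 0 ≤ a) (hb : 0 < b) (hne : a ≠ b) :
    a - b < a * Real.log (a / b) := by
  rcases eq_or_lt_of_le ha with h0 | h0
  · rw [← h0]; simp; linarith
  · have hba : b / a ≠ 1 := by
      intro h
      apply hne
      field_simp at h
      linarith
    have h1 : Real.log (b / a) < b / a - 1 := Real.log_lt_sub_one_of_pos (by positivity) hba
    have h2 : Real.log (b / a) = - Real.log (a / b) := by
      rw [← Real.log_inv, inv_div]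
    rw [h2] at h1
    have h3 := mul_lt_mul_of_pos_left h1 h0
    have h4 : a * (b / a - 1) = b - a := by field_simp
    rw [h4, mul_neg] at h3
    linarith

private lemma ptwise_log_le {a b : ℝ} (ha : 0 ≤ a) (hb : 0 < b) :
    a - b ≤ a * Real.log (a / b) := by
  rcases eq_or_ne a b with rfl | h
  · rw [div_self hb.ne']; simp
  · exact (ptwise_log_strict ha hb h).le

private lemma log_sum_ineq {X : Type*} [Fintype X] (f g : X → ℝ)
    (hf : ∀ x, 0 ≤ f x) (hg : ∀ x, 0 ≤ g x) (habs : ∀ x, g x = 0 → f x = 0) :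
    (∑ x, f x) * Real.log ((∑ x, f x) / (∑ x, g x)) ≤ ∑ x, f x * Real.log (f x / g x) := by
  rcases eq_or_lt_of_le (Finset.sum_nonneg fun x _ => hf x : (0:ℝ) ≤ ∑ x, f x) with h0 | hFpos
  · have hfz : ∀ x, f x = 0 := fun x =>
      (Finset.sum_eq_zero_iff_of_nonneg (fun x _ => hf x)).mp h0.symm x (Finset.mem_univ x)
    simp [hfz]
  · have hGpos : 0 < ∑ x, g x := by
      rcases eq_or_lt_of_le (Finset.sum_nonneg fun x _ => hg x : (0:ℝ) ≤ ∑ x, g x) with h0 | h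
      · exfalso
        have hgz := (Finset.sum_eq_zero_iff_of_nonneg (fun x _ => hg x)).mp h0.symm
        have : ∑ x, f x = 0 :=
          Finset.sum_eq_zero fun x _ => habs x (hgz x (Finset.mem_univ x))
        linarith
      · exact h
    set F := ∑ x, f x with hF
    set G := ∑ x, g x with hG
    have key : ∀ x, f x * Real.log (F / G) + f x - g x * (F / G) ≤ f x * Real.log (f x / g x) := by
      intro x
      rcases eq_or_lt_of_le (hf x) with h0 | hfx
      · rw [← h0]
        have : 0 ≤ g x * (F / G) := mul_nonneg (hg x) (by positivity)
        simp only [zero_mul, zero_add, zero_sub]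
        linarith
      · have hgx : 0 < g x := by
          rcases eq_or_lt_of_le (hg x) with h | h
          · exact absurd (habs x h.symm) hfx.ne'
          · exact h
        have h := ptwise_log hfx (show (0:ℝ) < g x * (F / G) by positivity)
        have h2 : Real.log (f x / (g x * (F / G))) =
            Real.log (f x / g x) - Real.log (F / G) := by
          rw [← div_div, Real.log_div (by positivity) (by positivity)]
        rw [h2, mul_sub] at h
        linarith
    have hsum2 : ∑ x, (f x * Real.log (F / G) + f x - g x * (F / G)) = F * Real.log (F / G) := by
      rw [Finset.sum_sub_distrib, Finset.sum_add_distrib, ← Finset.sum_mul, ← Finset.sum_mul,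
        ← hF, ← hG]
      have hGF : G * (F / G) = F := by field_simp
      rw [hGF]; ring
    calc F * Real.log (F / G) = _ := hsum2.symm
      _ ≤ _ := Finset.sum_le_sum fun x _ => key x

private lemma KL_self {X : Type*} [Fintype X] (f : X → ℝ) : KL f f = 0 :=
  Finset.sum_eq_zero fun x _ => by
    rcases eq_or_ne (f x) 0 with h | h
    · simp [h]
    · simp [div_self h]

private lemma KL_nonneg' {X : Type*} [Fintype X] (f g : X → ℝ)
    (hf : ∀ x, 0 ≤ f x) (hg : ∀ x, 0 ≤ g x) (habs : ∀ x, g x = 0 → f x = 0)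
    (hsum : ∑ x, f x = ∑ x, g x) : 0 ≤ KL f g := by
  have h := log_sum_ineq f g hf hg habs
  rw [hsum] at h
  have h0 : (∑ x, g x) * Real.log ((∑ x, g x) / (∑ x, g x)) = 0 := by
    rcases eq_or_ne (∑ x, g x) 0 with h0 | h0
    · rw [h0]; ring
    · rw [div_self h0, Real.log_one, mul_zero]
  rw [h0] at h
  exact h

private lemma KL_pos' {X : Type*} [Fintype X] (r p : X → ℝ)
    (hr : ∀ x, 0 ≤ r x) (hp : ∀ x, 0 < p x) (hsum : ∑ x, r x = ∑ x, p x)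
    (hne : r ≠ p) : 0 < KL r p := by
  obtain ⟨x₀, hx₀⟩ := Function.ne_iff.mp hne
  have hlt : ∑ x, (r x - p x) < ∑ x, r x * Real.log (r x / p x) :=
    Finset.sum_lt_sum (fun x _ => ptwise_log_le (hr x) (hp x))
      ⟨x₀, Finset.mem_univ x₀, ptwise_log_strict (hr x₀) (hp x₀) hx₀⟩
  have hz : ∑ x, (r x - p x) = 0 := by rw [Finset.sum_sub_distrib, hsum, sub_self]
  unfold KL
  linarith

private lemma KL_dpi {X Y : Type*} [Fintype X] [Fintype Y] (r p : X → ℝ) (W : X → Y → ℝ)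
    (hr : ∀ x, 0 ≤ r x) (hp : ∀ x, 0 < p x)
    (hW0 : ∀ x y, 0 ≤ W x y) (hW1 : ∀ x, ∑ y, W x y = 1) :
    KL (fun y => ∑ x, r x * W x y) (fun y => ∑ x, p x * W x y) ≤ KL r p := by
  unfold KL
  have hy : ∀ y, (∑ x, r x * W x y) * Real.log ((∑ x, r x * W x y) / (∑ x, p x * W x y)) ≤
      ∑ x, (r x * W x y) * Real.log ((r x * W x y) / (p x * W x y)) := by
    intro y
    apply log_sum_ineq (fun x => r x * W x y) (fun x => p x * W x y)
      (fun x => mul_nonneg (hr x) (hW0 x y)) (fun x => mul_nonneg (hp x).le (hW0 x y))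
    intro x h
    rcases mul_eq_zero.mp h with h | h
    · exact absurd h (hp x).ne'
    · rw [h, mul_zero]
  calc ∑ y, (∑ x, r x * W x y) * Real.log ((∑ x, r x * W x y) / (∑ x, p x * W x y))
      ≤ ∑ y, ∑ x, (r x * W x y) * Real.log ((r x * W x y) / (p x * W x y)) :=
        Finset.sum_le_sum fun y _ => hy y
    _ = ∑ x, ∑ y, (r x * W x y) * Real.log ((r x * W x y) / (p x * W x y)) := Finset.sum_comm
    _ = ∑ x, r x * Real.log (r x / p x) := by
        apply Finset.sum_congr rfl
        intro x _
        have h : ∀ y, (r x * W x y) * Real.log ((r x * W x y) / (p x * W x y)) =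
            (r x * Real.log (r x / p x)) * W x y := by
          intro y
          rcases eq_or_ne (W x y) 0 with h | h
          · simp [h]
          · rw [mul_div_mul_right _ _ h]; ring
        rw [Finset.sum_congr rfl fun y _ => h y, ← Finset.mul_sum, hW1 x, mul_one]

private lemma mutInfo_eq {U X : Type*} [Fintype U] [Fintype X] (q : U → X → ℝ)
    (hq : ∀ u x, 0 ≤ q u x) :
    mutInfo q = ∑ u, ∑ x, q u x * Real.log (q u x / ((∑ x', q u x') * (∑ u', q u' x))) := by
  have key : ∀ u x, q u x * Real.log (q u x / ((∑ x', q u x') * (∑ u', q u' x)))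
      = q u x * Real.log (q u x) - q u x * Real.log (∑ x', q u x')
        - q u x * Real.log (∑ u', q u' x) := by
    intro u x
    rcases eq_or_lt_of_le (hq u x) with h0 | hpos
    · rw [← h0]; simp
    · have hA : 0 < ∑ x', q u x' :=
        lt_of_lt_of_le hpos (Finset.single_le_sum (fun i _ => hq u i) (Finset.mem_univ x))
      have hB : 0 < ∑ u', q u' x :=
        lt_of_lt_of_le hpos (Finset.single_le_sum (fun i _ => hq i x) (Finset.mem_univ u))
      rw [Real.log_div hpos.ne' (by positivity), Real.log_mul hA.ne' hB.ne']
      ring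
  have h1 : ∀ u, ∑ x, (q u x * Real.log (q u x) - q u x * Real.log (∑ x', q u x')
      - q u x * Real.log (∑ u', q u' x))
      = (∑ x, q u x * Real.log (q u x)) - (∑ x', q u x') * Real.log (∑ x', q u x')
        - ∑ x, q u x * Real.log (∑ u', q u' x) := by
    intro u
    rw [Finset.sum_sub_distrib, Finset.sum_sub_distrib, ← Finset.sum_mul]
  have h2 : ∑ u, ∑ x, q u x * Real.log (∑ u', q u' x)
      = ∑ x, (∑ u', q u' x) * Real.log (∑ u', q u' x) := by
    rw [Finset.sum_comm]
    exact Finset.sum_congr rfl fun x _ => by rw [← Finset.sum_mul]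
  calc mutInfo q
      = (∑ u, ∑ x, q u x * Real.log (q u x))
        - (∑ u, (∑ x', q u x') * Real.log (∑ x', q u x'))
        - ∑ x, (∑ u', q u' x) * Real.log (∑ u', q u' x) := by
        unfold mutInfo entropy
        rw [Fintype.sum_prod_type]
        simp only [Real.negMulLog, neg_mul]
        simp only [Finset.sum_neg_distrib]
        ring
    _ = ∑ u, ∑ x, q u x * Real.log (q u x / ((∑ x', q u x') * (∑ u', q u' x))) := by
        simp only [key]
        rw [Finset.sum_congr rfl fun u _ => h1 u, Finset.sum_sub_distrib,
          Finset.sum_sub_distrib, h2]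

private lemma cancel_aux {A q L : ℝ} (h : A ≠ 0) : A * (q / A * L) = q * L := by
  field_simp

/-- the corrected data processing inequality:
for any Markov chain `U - X - Y`, `I(U;Y) ≤ s*(X;Y) · I(U;X)`. -/
theorem data_processing_sStar {U X Y : Type*} [Fintype U] [Fintype X] [Fintype Y]
    (p : X → ℝ) (W : X → Y → ℝ) (q : U → X → ℝ)
    (hp : IsPMF p) (hpos : ∀ x, 0 < p x) (hW : ∀ x, IsPMF (W x))
    (hq : ∀ u x, 0 ≤ q u x) (hmarg : ∀ x, ∑ u, q u x = p x) :
    mutInfo (fun u y => ∑ x, q u x * W x y) ≤ sStar p W * mutInfo q := by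
  classical
  have hq'0 : ∀ u y, 0 ≤ ∑ x, q u x * W x y :=
    fun u y => Finset.sum_nonneg fun x _ => mul_nonneg (hq u x) ((hW x).1 y)
  have hsumW : ∀ a : X → ℝ, ∑ y, ∑ x, a x * W x y = ∑ x, a x := by
    intro a
    rw [Finset.sum_comm]
    exact Finset.sum_congr rfl fun x _ => by rw [← Finset.mul_sum, (hW x).2, mul_one]
  have hmargU : ∀ y, ∑ u, ∑ x, q u x * W x y = ∑ x, p x * W x y := by
    intro y
    rw [Finset.sum_comm]
    exact Finset.sum_congr rfl fun x _ => by rw [← Finset.sum_mul, hmarg x]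
  set S : Set ℝ := {c : ℝ | ∃ r : X → ℝ, IsPMF r ∧ r ≠ p ∧
    c = KL (fun y => ∑ x, r x * W x y) (fun y => ∑ x, p x * W x y) / KL r p} with hSdef
  have hss : sStar p W = sSup S := rfl
  have hSle : ∀ c ∈ S, c ≤ 1 := by
    rintro c ⟨r, hrpmf, hrne, rfl⟩
    have hKLX : 0 < KL r p := KL_pos' r p hrpmf.1 hpos (by rw [hrpmf.2, hp.2]) hrne
    have hdpi := KL_dpi r p W hrpmf.1 hpos (fun x => (hW x).1) (fun x => (hW x).2)
    exact (div_le_one hKLX).mpr hdpi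
  have hbdd : BddAbove S := ⟨1, fun c hc => hSle c hc⟩
  rw [mutInfo_eq (fun u y => ∑ x, q u x * W x y) hq'0, mutInfo_eq q hq]
  simp only [hmarg, hmargU, hsumW]
  rw [Finset.mul_sum]
  apply Finset.sum_le_sum
  intro u _
  by_cases hAu : (∑ x, q u x) = 0
  · have hqz : ∀ x, q u x = 0 := fun x =>
      (Finset.sum_eq_zero_iff_of_nonneg (fun x _ => hq u x)).mp hAu x (Finset.mem_univ x)
    simp [hqz]
  · have hApos : 0 < ∑ x, q u x :=
      (Finset.sum_nonneg fun x _ => hq u x).lt_of_ne (Ne.symm hAu)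
    set r : X → ℝ := fun x => q u x / (∑ x', q u x') with hrdef
    have hrpmf : IsPMF r :=
      ⟨fun x => div_nonneg (hq u x) hApos.le, by
        simp only [hrdef]
        rw [← Finset.sum_div, div_self hAu]⟩
    have hX : ∑ x, q u x * Real.log (q u x / ((∑ x', q u x') * p x))
        = (∑ x', q u x') * KL r p := by
      simp only [KL, hrdef]
      rw [Finset.mul_sum]
      apply Finset.sum_congr rfl
      intro x _
      rw [div_div, cancel_aux hAu]
    have hQ : ∀ y, ∑ x, q u x * W x y = (∑ x', q u x') * ∑ x, r x * W x y := by
      intro y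
      rw [Finset.mul_sum]
      exact Finset.sum_congr rfl fun x _ => (cancel_aux hAu).symm
    have hY : ∑ y, (∑ x, q u x * W x y) *
          Real.log ((∑ x, q u x * W x y) / ((∑ x', q u x') * ∑ x, p x * W x y))
        = (∑ x', q u x') * KL (fun y => ∑ x, r x * W x y) (fun y => ∑ x, p x * W x y) := by
      simp only [KL]
      rw [Finset.mul_sum]
      apply Finset.sum_congr rfl
      intro y _
      rw [hQ y, mul_div_mul_left _ _ hAu]
      ring
    rw [hX, hY]
    by_cases hrp : r = p
    · rw [hrp, KL_self, KL_self]
      simp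
    · have hKLX : 0 < KL r p := KL_pos' r p hrpmf.1 hpos (by rw [hrpmf.2, hp.2]) hrp
      have hmem : KL (fun y => ∑ x, r x * W x y) (fun y => ∑ x, p x * W x y) / KL r p ∈ S :=
        ⟨r, hrpmf, hrp, rfl⟩
      have hle := le_csSup hbdd hmem
      rw [div_le_iff₀ hKLX] at hle
      rw [hss]
      calc (∑ x', q u x') * KL (fun y => ∑ x, r x * W x y) (fun y => ∑ x, p x * W x y)
          ≤ (∑ x', q u x') * (sSup S * KL r p) := mul_le_mul_of_nonneg_left hle hApos.le
        _ = sSup S * ((∑ x', q u x') * KL r p) := by ring
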